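/- Let T = 10√5 − 18. The polynomial f(y) = 6y⁶ − 42y⁵ + (5T+108)y⁴ − (10T+192)y³ + (T²+256)y² + (4T²−64T)y + 4T² has no roots in the open interval (0, 2). -/
import Mathlib

theorem stmt8 (T : ℝ) (hT : T = 10 * Real.sqrt 5 - 18) :
    ∀ y ∈ Set.Ioo (0:ℝ) 2,
      6*y^6 - 42*y^5 + (5*T + 108)*y^4 - (10*T + 192)*y^3
        + (T^2 + 256)*y^2 + (4*T^2 - 64*T)*y + 4*T^2 ≠ 0 := by
  intro y hy
  obtain ⟨hy0, hy2⟩ := hy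
  set s := Real.sqrt 5 with hs
  have hs2 : s^2 = 5 := Real.sq_sqrt (by norm_num)
  have hsl : (2.236:ℝ) < s := by
    nlinarith [Real.sqrt_nonneg 5, hs2]
  have hsu : s < 2.2361 := by
    nlinarith [Real.sqrt_nonneg 5, hs2]
  subst hT
  intro h
  nlinarith [sq_nonneg (y-2), sq_nonneg (y-1), sq_nonneg (y*(y-2)), sq_nonneg (y^2*(y-2)), sq_nonneg (y*(y-1)), sq_nonneg (y^2-2*y+2), mul_pos hy0 (sub_pos.mpr hy2), sq_nonneg ((y-1)*(y-2)), hs2, hsl, hsu, sq_nonneg (y^3-3*y^2+2*y)]
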